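/- For each i with 1 ≤ i ≤ 16, let w_i be the special word of length i from the list w_1=1, w_2=02, w_3=121, w_4=2102, w_5=12102, w_6=020121, w_7=2120102, w_8=01020121, w_9=121020121, w_10=2021012102, w_11=10121020121, w_12=101202120121, w_13=0210121020121, w_14=01021201020121, w_15=010201202120121, w_16=0201021201020121. Then w_i·φ(0) is irreducibly square-free, where φ(0)=01202120102120210. -/

import Mathlib

/-- A word has a square if some nonempty `u` with `u ++ u` an infix. -/
def HasSquare (w : List (Fin 3)) : Prop :=
  ∃ u : List (Fin 3), u ≠ [] ∧ (u ++ u) <:+: w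

def SquareFree (w : List (Fin 3)) : Prop := ¬ HasSquare w

/-- `u` occurs as a factor of the infinite word `x`. -/
def InfFactor (u : List (Fin 3)) (x : ℕ → Fin 3) : Prop :=
  ∃ m : ℕ, ∀ i < u.length, u.getD i 0 = x (m + i)

def InfSquareFree (x : ℕ → Fin 3) : Prop :=
  ¬ ∃ u : List (Fin 3), u ≠ [] ∧ InfFactor (u ++ u) x

/-- A square-free word is irreducibly square-free if deleting any interior
letter creates a square. -/
def IrrSF (w : List (Fin 3)) : Prop :=
  SquareFree w ∧
    ∀ (w1 w2 : List (Fin 3)) (a : Fin 3),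
      w = w1 ++ [a] ++ w2 → w1 ≠ [] → w2 ≠ [] → HasSquare (w1 ++ w2)

/-- The uniform morphism φ of length 17. -/
def phi : Fin 3 → List (Fin 3) := ![[0,1,2,0,2,1,2,0,1,0,2,1,2,0,2,1,0], [1,2,0,1,0,2,0,1,2,1,0,2,0,1,0,2,1], [2,0,1,2,1,0,1,2,0,2,1,0,1,2,1,0,2]]

def phiW (w : List (Fin 3)) : List (Fin 3) := w.flatMap phi

/-- The special words `w_1, …, w_16` (`special i` is `w_(i+1)`). -/
def special : Fin 16 → List (Fin 3) :=
  ![[1], [0,2], [1,2,1], [2,1,0,2], [1,2,1,0,2], [0,2,0,1,2,1], [2,1,2,0,1,0,2], [0,1,0,2,0,1,2,1], [1,2,1,0,2,0,1,2,1], [2,0,2,1,0,1,2,1,0,2], [1,0,1,2,1,0,2,0,1,2,1], [1,0,1,2,0,2,1,2,0,1,2,1], [0,2,1,0,1,2,1,0,2,0,1,2,1], [0,1,0,2,1,2,0,1,0,2,0,1,2,1], [0,1,0,2,0,1,2,0,2,1,2,0,1,2,1], [0,2,0,1,0,2,1,2,0,1,0,2,0,1,2,1]]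

/-!
Both properties are decidable for finite words: a square is a prefix `u ++ u` of some suffix,
and irreducibility only concerns the deletions at interior positions. The theorem is then a
finite computation, carried out by the kernel.
-/

def startsWithSquare (t : List (Fin 3)) : Bool :=
  (List.range (t.length / 2)).any fun l => (t.take (l + 1)).isPrefixOf (t.drop (l + 1))

theorem startsWithSquare_iff (t : List (Fin 3)) :
    startsWithSquare t ↔ ∃ u : List (Fin 3), u ≠ [] ∧ u ++ u <+: t := by
  simp only [startsWithSquare, List.any_eq_true, List.mem_range, List.isPrefixOf_iff_prefix]
  constructor
  · rintro ⟨l, hl, r, hr⟩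
    refine ⟨t.take (l + 1), List.ne_nil_of_length_pos (by simp; omega), r, ?_⟩
    rw [List.append_assoc, hr, List.take_append_drop]
  · rintro ⟨u, hu, r, rfl⟩
    have hu : 0 < u.length := List.length_pos_iff.2 hu
    refine ⟨u.length - 1, by simp; omega, r, ?_⟩
    rw [Nat.sub_add_cancel hu, List.append_assoc, List.take_left, List.drop_left]

theorem hasSquare_iff_exists_tail (w : List (Fin 3)) :
    HasSquare w ↔ ∃ t ∈ w.tails, startsWithSquare t := by
  simp only [HasSquare, List.infix_iff_prefix_suffix, List.mem_tails, startsWithSquare_iff]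
  exact ⟨fun ⟨u, hu, t, hp, hs⟩ => ⟨t, hs, u, hu, hp⟩,
    fun ⟨t, hs, u, hu, hp⟩ => ⟨u, hu, t, hp, hs⟩⟩

instance : DecidablePred HasSquare := fun w =>
  decidable_of_iff _ (hasSquare_iff_exists_tail w).symm

instance : DecidablePred SquareFree := fun w => inferInstanceAs (Decidable ¬HasSquare w)

theorem irrSF_iff_hasSquare_eraseIdx (w : List (Fin 3)) :
    IrrSF w ↔ SquareFree w ∧ ∀ j < w.length - 1, 0 < j → HasSquare (w.eraseIdx j) := by
  refine and_congr_right fun _ => ⟨fun h j hj hj0 => ?_, ?_⟩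
  · rw [List.eraseIdx_eq_take_drop_succ]
    refine h _ _ w[j] ?_ (List.ne_nil_of_length_pos (by simp; omega))
      (List.ne_nil_of_length_pos (by simp; omega))
    rw [List.append_assoc, List.singleton_append, ← List.drop_eq_getElem_cons,
      List.take_append_drop]
  · rintro h w1 w2 a rfl hw1 hw2
    have h1 : 0 < w1.length := List.length_pos_iff.2 hw1
    have h2 : 0 < w2.length := List.length_pos_iff.2 hw2
    have := h w1.length (by simp; omega) h1
    rwa [List.eraseIdx_eq_take_drop_succ, List.append_assoc, List.take_left, ← List.drop_drop,
      List.drop_left, List.singleton_append, List.drop_one, List.tail_cons] at this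

instance : DecidablePred IrrSF := fun w =>
  decidable_of_iff _ (irrSF_iff_hasSquare_eraseIdx w).symm

theorem special_phi0_irreducibly_squareFree (i : Fin 16) :
    (special i).length = (i : ℕ) + 1 ∧ IrrSF (special i ++ phi 0) := by
  revert i
  decide +kernel
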